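/- Conditional mean of the Ehrenfest process (Theorem 3.3(b)): for every i ∈ {0,1,…,N} and every t ≥ 0, Σ_{j=0}^{N} j · p_{ij}(t) = N·p − (N·p − i)·e^{−λ(α+β)t}. -/

import Mathlib

open Finset

/-- The Krawtchouk polynomial `K_l(x; N; p)`, defined via the hypergeometric sum. -/
noncomputable def krawtchouk (N : ℕ) (p : ℝ) (l x : ℕ) : ℝ :=
  ∑ k ∈ Finset.range (N + 1),
    ((ascPochhammer ℝ k).eval (-(l : ℝ)) * (ascPochhammer ℝ k).eval (-(x : ℝ))) /
      ((ascPochhammer ℝ k).eval (-(N : ℝ)) * (Nat.factorial k : ℝ)) * (1 / p) ^ k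

/-- Transition probabilities `p_{ij}(t)` of the continuous-time Ehrenfest process,
where `p = α/(α+β)` and `q = 1 - p`. -/
noncomputable def ehrenfestP (N : ℕ) (p q lam α β : ℝ) (i j : ℕ) (t : ℝ) : ℝ :=
  (N.choose j : ℝ) * (p / q) ^ j *
    ∑ x ∈ Finset.range (N + 1),
      (N.choose x : ℝ) * p ^ x * q ^ (N - x) * krawtchouk N p i x * krawtchouk N p j x *
        Real.exp (-(lam * (α + β) * (x : ℝ) * t))

/-!
Since `K_j(x) = K_x(j)`, exchanging the two sums reduces the mean to the first binomial
moments `∑ⱼ C(N,j) pʲ q^(N-j) j K_x(j)`. Expanding `K_x` in the basis `C(j,k)` turns these into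
the factorial moments `∑ⱼ C(N,j) pʲ q^(N-j) j C(j,k) = C(N,k) pᵏ (Np + kq)`, and alternating
binomial sums then show that the moment is `Np` at `x = 0`, `-q` at `x = 1` and `0` otherwise.
So only the stationary mode `x = 0` and the slowest mode `x = 1`, decaying at rate `λ(α+β)` with
`Np K_i(1) = Np - i`, survive.
-/

section Binomial

variable {R : Type*}

theorem Nat.mul_choose_eq_add (j k : ℕ) :
    j * j.choose k = k * j.choose k + (k + 1) * j.choose (k + 1) := by
  rw [mul_comm (k + 1), Nat.choose_succ_right_eq]
  rcases le_or_gt k j with hkj | hjk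
  · rw [mul_comm _ (j - k), ← add_mul, Nat.add_sub_cancel' hkj]
  · simp [Nat.choose_eq_zero_of_lt hjk]

theorem sum_choose_mul_pow_mul_choose [CommSemiring R] (p q : R) (N k : ℕ) :
    ∑ j ∈ range (N + 1), (N.choose j : R) * p ^ j * q ^ (N - j) * (j.choose k : R) =
      (N.choose k : R) * p ^ k * (p + q) ^ (N - k) := by
  rcases le_or_gt k N with hkN | hNk
  · have hsplit : range (N + 1) = Ico 0 k ∪ Ico k (N + 1) := by
      rw [Ico_union_Ico_eq_Ico (Nat.zero_le k) (by omega), range_eq_Ico]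
    rw [hsplit, sum_union (Ico_disjoint_Ico_consecutive 0 k (N + 1)),
      sum_eq_zero fun j hj => by simp [Nat.choose_eq_zero_of_lt (mem_Ico.1 hj).2],
      zero_add, sum_Ico_eq_sum_range, show N + 1 - k = N - k + 1 by omega, add_pow, mul_sum]
    refine sum_congr rfl fun m hm => ?_
    have hchoose : (N.choose (k + m) : R) * ((k + m).choose k : R) =
        (N.choose k : R) * ((N - k).choose m : R) := by
      have := Nat.choose_mul (n := N) (k := k + m) (s := k) (by omega)
      rw [Nat.add_sub_cancel_left] at this
      simpa using congrArg (Nat.cast (R := R)) this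
    calc _ = (N.choose (k + m) : R) * ((k + m).choose k : R) *
            (p ^ k * p ^ m * q ^ (N - k - m)) := by
          rw [show N - (k + m) = N - k - m by omega, pow_add]; ring
      _ = _ := by rw [hchoose]; ring
  · rw [Nat.choose_eq_zero_of_lt hNk, Nat.cast_zero, zero_mul, zero_mul]
    exact sum_eq_zero fun j hj => by
      rw [Nat.choose_eq_zero_of_lt (n := j) (by simp at hj; omega), Nat.cast_zero, mul_zero]

theorem sum_choose_mul_pow_mul_natCast_mul_choose [CommRing R] {p q : R} (hpq : p + q = 1)
    (N k : ℕ) :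
    ∑ j ∈ range (N + 1), (N.choose j : R) * p ^ j * q ^ (N - j) * ((j : R) * (j.choose k : R)) =
      (N.choose k : R) * p ^ k * (N * p + k * q) := by
  have hterm (j : ℕ) : (j : R) * (j.choose k : R) =
      k * (j.choose k : R) + (k + 1) * (j.choose (k + 1) : R) := by
    simpa using congrArg (Nat.cast (R := R)) (Nat.mul_choose_eq_add j k)
  simp only [hterm, mul_add, sum_add_distrib, mul_left_comm _ (k : R),
    mul_left_comm _ ((k : R) + 1), ← mul_sum, sum_choose_mul_pow_mul_choose, hpq, one_pow, mul_one]
  rcases le_or_gt k N with hkN | hNk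
  · have hsucc : ((k : R) + 1) * (N.choose (k + 1) : R) = (N.choose k : R) * ((N : R) - k) := by
      have := congrArg (Nat.cast (R := R)) (Nat.choose_succ_right_eq N k)
      push_cast [hkN] at this
      linear_combination this
    linear_combination (p ^ (k + 1)) * hsucc - (N.choose k : R) * p ^ k * k * hpq
  · simp [Nat.choose_eq_zero_of_lt hNk, Nat.choose_eq_zero_of_lt (Nat.lt_succ_of_lt hNk)]

end Binomial

section Alternating

variable {R : Type*} [CommRing R]

theorem sum_range_neg_one_pow_mul_choose (x : ℕ) :
    ∑ k ∈ range (x + 1), (-1 : R) ^ k * (x.choose k : R) = if x = 0 then 1 else 0 := by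
  have := congrArg (Int.cast (R := R)) (Int.alternating_sum_range_choose (n := x))
  push_cast [apply_ite (Int.cast (R := R))] at this
  exact this

theorem sum_range_neg_one_pow_mul_natCast_mul_choose (x : ℕ) :
    ∑ k ∈ range (x + 1), (-1 : R) ^ k * ((k : R) * (x.choose k : R)) =
      if x = 1 then -1 else 0 := by
  cases x with
  | zero => simp
  | succ m =>
    have hterm (k : ℕ) : (-1 : R) ^ (k + 1) * (((k + 1 : ℕ) : R) * ((m + 1).choose (k + 1) : R)) =
        -((m : R) + 1) * ((-1 : R) ^ k * (m.choose k : R)) := by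
      have := congrArg (Nat.cast (R := R)) (Nat.add_one_mul_choose_eq m k)
      push_cast at this ⊢
      linear_combination (-1 : R) ^ k * this
    rw [sum_range_succ', sum_congr rfl fun k _ => hterm k, ← mul_sum,
      sum_range_neg_one_pow_mul_choose]
    rcases eq_or_ne m 0 with rfl | hm <;> simp [*]

end Alternating

theorem ascPochhammer_eval_neg_natCast {R : Type*} [CommRing R] (m k : ℕ) :
    (ascPochhammer R k).eval (-(m : R)) = (-1) ^ k * (k.factorial : R) * (m.choose k : R) := by
  rw [ascPochhammer_eval_neg_eq_descPochhammer, descPochhammer_eval_eq_descFactorial,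
    Nat.descFactorial_eq_factorial_mul_choose]
  push_cast
  ring

theorem krawtchouk_eq_sum_choose (N : ℕ) (p : ℝ) (l x : ℕ) :
    krawtchouk N p l x = ∑ k ∈ range (N + 1),
      (-1) ^ k * (l.choose k : ℝ) * (x.choose k : ℝ) / (N.choose k : ℝ) * (1 / p) ^ k := by
  refine sum_congr rfl fun k hk => ?_
  have hNk : (N.choose k : ℝ) ≠ 0 := by
    exact_mod_cast (Nat.choose_pos (Nat.lt_succ_iff.1 (mem_range.1 hk))).ne'
  simp only [ascPochhammer_eval_neg_natCast]
  field_simp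

theorem krawtchouk_comm (N : ℕ) (p : ℝ) (l x : ℕ) :
    krawtchouk N p l x = krawtchouk N p x l := by
  simp only [krawtchouk, mul_comm ((ascPochhammer ℝ _).eval (-(l : ℝ)))]

theorem krawtchouk_zero_right (N : ℕ) (p : ℝ) (l : ℕ) : krawtchouk N p l 0 = 1 := by
  rw [krawtchouk_eq_sum_choose, sum_eq_single 0
    (fun k _ hk => by simp [Nat.choose_eq_zero_of_lt (Nat.pos_of_ne_zero hk)]) (by simp)]
  simp

theorem natCast_mul_mul_krawtchouk_one_right {N l : ℕ} (hl : l ≤ N) {p : ℝ} (hp : p ≠ 0) :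
    N * p * krawtchouk N p l 1 = N * p - l := by
  rw [krawtchouk_eq_sum_choose]
  cases N with
  | zero => simp_all
  | succ n =>
    rw [sum_range_succ', sum_range_succ',
      sum_eq_zero fun k _ => by simp [Nat.choose_eq_zero_of_lt (show 1 < k + 1 + 1 by omega)]]
    simp only [zero_add, pow_zero, pow_one, Nat.choose_zero_right, Nat.choose_one_right,
      Nat.choose_self]
    push_cast
    field_simp
    ring

theorem sum_binomial_mul_natCast_mul_krawtchouk {N x : ℕ} (hx : x ≤ N) {p q : ℝ} (hp : p ≠ 0)
    (hpq : p + q = 1) :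
    ∑ j ∈ range (N + 1), (N.choose j : ℝ) * p ^ j * q ^ (N - j) * ((j : ℝ) * krawtchouk N p x j) =
      (if x = 0 then N * p else 0) - (if x = 1 then q else 0) := by
  calc _ = ∑ k ∈ range (N + 1), (-1) ^ k * (x.choose k : ℝ) / (N.choose k : ℝ) * (1 / p) ^ k *
          ∑ j ∈ range (N + 1),
            (N.choose j : ℝ) * p ^ j * q ^ (N - j) * ((j : ℝ) * (j.choose k : ℝ)) := by
        simp only [krawtchouk_eq_sum_choose, mul_sum]
        rw [sum_comm]
        refine sum_congr rfl fun k _ => sum_congr rfl fun j _ => ?_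
        ring
    _ = ∑ k ∈ range (N + 1), (N * p * ((-1) ^ k * (x.choose k : ℝ)) +
          q * ((-1) ^ k * ((k : ℝ) * (x.choose k : ℝ)))) := by
        refine sum_congr rfl fun k hk => ?_
        have hNk : (N.choose k : ℝ) ≠ 0 := by
          exact_mod_cast (Nat.choose_pos (Nat.lt_succ_iff.1 (mem_range.1 hk))).ne'
        rw [sum_choose_mul_pow_mul_natCast_mul_choose hpq, one_div, inv_pow]
        field_simp
    _ = ∑ k ∈ range (x + 1), (N * p * ((-1) ^ k * (x.choose k : ℝ)) +
          q * ((-1) ^ k * ((k : ℝ) * (x.choose k : ℝ)))) := by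
        refine (sum_subset (range_subset_range.2 (by omega)) fun k _ hk => ?_).symm
        simp [Nat.choose_eq_zero_of_lt (not_lt.1 (mt mem_range.2 hk))]
    _ = _ := by
      rw [sum_add_distrib, ← mul_sum, ← mul_sum, sum_range_neg_one_pow_mul_choose,
        sum_range_neg_one_pow_mul_natCast_mul_choose]
      split_ifs <;> simp_all

theorem choose_mul_div_pow (N j : ℕ) (p : ℝ) {q : ℝ} (hq : q ≠ 0) :
    (N.choose j : ℝ) * (p / q) ^ j = (N.choose j : ℝ) * p ^ j * q ^ (N - j) / q ^ N := by
  rcases le_or_gt j N with hjN | hNj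
  · rw [div_pow, pow_sub₀ q hq hjN]
    field_simp
  · simp [Nat.choose_eq_zero_of_lt hNj]

theorem sum_natCast_mul_ehrenfestP {N i : ℕ} (hi : i ≤ N) {p q : ℝ} (hp : p ≠ 0) (hq : q ≠ 0)
    (hpq : p + q = 1) (lam α β t : ℝ) :
    ∑ j ∈ range (N + 1), (j : ℝ) * ehrenfestP N p q lam α β i j t =
      N * p - (N * p - i) * Real.exp (-(lam * (α + β) * t)) := by
  set E : ℕ → ℝ := fun x => Real.exp (-(lam * (α + β) * (x : ℝ) * t)) with hE
  have hmean : ∀ x ∈ range (N + 1),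
      ∑ j ∈ range (N + 1), (j : ℝ) * ((N.choose j : ℝ) * (p / q) ^ j) * krawtchouk N p j x =
        ((if x = 0 then N * p else 0) - (if x = 1 then q else 0)) / q ^ N := by
    intro x hx
    rw [← sum_binomial_mul_natCast_mul_krawtchouk (Nat.lt_succ_iff.1 (mem_range.1 hx)) hp hpq,
      sum_div]
    refine sum_congr rfl fun j _ => ?_
    rw [choose_mul_div_pow N j p hq, krawtchouk_comm]
    ring
  calc _ = ∑ x ∈ range (N + 1),
          (N.choose x : ℝ) * p ^ x * q ^ (N - x) * krawtchouk N p i x * E x *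
          ∑ j ∈ range (N + 1), (j : ℝ) * ((N.choose j : ℝ) * (p / q) ^ j) * krawtchouk N p j x := by
        simp only [ehrenfestP, mul_sum]
        rw [sum_comm]
        refine sum_congr rfl fun x _ => sum_congr rfl fun j _ => ?_
        ring
    _ = ∑ x ∈ range (N + 1), (N.choose x : ℝ) * (p / q) ^ x * krawtchouk N p i x * E x *
          ((if x = 0 then N * p else 0) - (if x = 1 then q else 0)) := by
        refine sum_congr rfl fun x hx => ?_
        rw [hmean x hx, choose_mul_div_pow N x p hq]
        ring
    _ = N * p - N * p * krawtchouk N p i 1 * E 1 := by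
        simp only [mul_sub, mul_ite, mul_zero, sum_sub_distrib, sum_ite_eq', mem_range]
        rcases Nat.eq_zero_or_pos N with rfl | hN
        · simp
        · rw [if_pos N.succ_pos, if_pos (Nat.succ_lt_succ hN), krawtchouk_zero_right]
          simp only [hE, Nat.choose_zero_right, Nat.choose_one_right, pow_zero, pow_one,
            Nat.cast_zero, Nat.cast_one, mul_zero, zero_mul, neg_zero, Real.exp_zero]
          field_simp
    _ = _ := by
        rw [natCast_mul_mul_krawtchouk_one_right hi hp, hE]
        simp

theorem ehrenfest_conditional_mean_general (N : ℕ) (lam α β : ℝ)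
    (hα : α ∈ Set.Ioc (0 : ℝ) 1) (hβ : β ∈ Set.Ioc (0 : ℝ) 1)
    (p q : ℝ) (hp : p = α / (α + β)) (hq : q = 1 - p)
    (i : ℕ) (hi : i ≤ N) (t : ℝ) :
    ∑ j ∈ Finset.range (N + 1), (j : ℝ) * ehrenfestP N p q lam α β i j t =
      (N : ℝ) * p - ((N : ℝ) * p - (i : ℝ)) * Real.exp (-(lam * (α + β) * t)) := by
  have hαβ : 0 < α + β := add_pos hα.1 hβ.1
  have hp0 : p ≠ 0 := hp ▸ (div_pos hα.1 hαβ).ne'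
  have hq0 : q ≠ 0 := by
    rw [hq, hp, one_sub_div hαβ.ne', add_sub_cancel_left]
    exact (div_pos hβ.1 hαβ).ne'
  exact sum_natCast_mul_ehrenfestP hi hp0 hq0 (by rw [hq]; ring) lam α β t

/-- Conditional mean of the Ehrenfest process. -/
theorem ehrenfest_conditional_mean (N : ℕ) (lam α β : ℝ) (hlam : 0 < lam)
    (hα : α ∈ Set.Ioc (0 : ℝ) 1) (hβ : β ∈ Set.Ioc (0 : ℝ) 1)
    (p q : ℝ) (hp : p = α / (α + β)) (hq : q = 1 - p)
    (i : ℕ) (hi : i ≤ N) (t : ℝ) (ht : 0 ≤ t) :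
    ∑ j ∈ Finset.range (N + 1), (j : ℝ) * ehrenfestP N p q lam α β i j t =
      (N : ℝ) * p - ((N : ℝ) * p - (i : ℝ)) * Real.exp (-(lam * (α + β) * t)) :=
  ehrenfest_conditional_mean_general N lam α β hα hβ p q hp hq i hi t
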